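/- arXiv:1408.2957 — 3 statements merged into one kernel-verified Lean document; each statement's English description precedes it below -/
import Mathlib

section
/- A 4×4 real matrix M satisfies M Isoc(â) = Isoc(â) M for all a ∈ ℝ³ and M K = K M if and only if M is a real linear combination of I₄ and K. -/
open Matrix

def isoc (a : Fin 3 → ℝ) : Matrix (Fin 4) (Fin 4) ℝ :=
  !![0, -a 2, a 1, -a 0;
     a 2, 0, -a 0, -a 1;
     -a 1, a 0, 0, -a 2;
     a 0, a 1, a 2, 0]

def Kmat : Matrix (Fin 4) (Fin 4) ℝ :=
  !![0,0,0,-1; 0,0,1,0; 0,-1,0,0; 1,0,0,0]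

/-!
Identify `ℝ⁴` with the quaternions `ℍ`, the last coordinate being the real part. Then `isoc a`
is right multiplication by the pure quaternion `-a` and `Kmat` is left multiplication by `-i`.
Left and right multiplications commute, which gives one direction. Conversely, a real-linear
map commuting with right multiplication by `i` and `j` commutes with all right multiplications,
so it is left multiplication by some `q`, and commuting with left multiplication by `i` forces
`q ∈ ℝ + ℝi`. In coordinates all three generators are signed permutation matrices, so each
commutation relation just identifies entries of `M` up to sign.
-/

theorem Commute.smul_one_add_smul_left {R A : Type*} [CommSemiring R] [Semiring A] [Algebra R A]
    {a b : A} (h : Commute a b) (c d : R) : Commute (c • 1 + d • a) b :=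
  ((Commute.one_left b).smul_left c).add_left (h.smul_left d)

theorem Kmat_commute_isoc (a : Fin 3 → ℝ) : Commute Kmat (isoc a) := by
  ext i j
  fin_cases i <;> fin_cases j <;> simp [isoc, Kmat, mul_apply, Fin.sum_univ_four]

theorem eq_smul_one_add_smul_Kmat_of_commute {M : Matrix (Fin 4) (Fin 4) ℝ}
    (h₀ : Commute M (isoc ![1, 0, 0])) (h₁ : Commute M (isoc ![0, 1, 0]))
    (hK : Commute M Kmat) : M = M 0 0 • 1 + M 3 0 • Kmat := by
  simp only [commute_iff_eq, ← Matrix.ext_iff, Fin.forall_fin_succ, IsEmpty.forall_iff, isoc,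
    Kmat, mul_apply, Fin.sum_univ_four, of_apply, cons_val', cons_val, cons_val_fin_one,
    Fin.succ_zero_eq_one, Fin.succ_one_eq_two, Fin.reduceSucc, mul_zero, mul_one, mul_neg,
    zero_mul, one_mul, neg_mul, neg_zero, add_zero, zero_add, neg_inj, and_true] at h₀ h₁ hK
  ext i j
  fin_cases i <;> fin_cases j <;> simp [Kmat, one_apply] <;> grind

theorem commutant_is_span_I_K (M : Matrix (Fin 4) (Fin 4) ℝ) :
    ((∀ a : Fin 3 → ℝ, M * isoc a = isoc a * M) ∧ M * Kmat = Kmat * M) ↔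
      ∃ c d : ℝ, M = c • (1 : Matrix (Fin 4) (Fin 4) ℝ) + d • Kmat := by
  constructor
  · rintro ⟨h, hK⟩
    exact ⟨M 0 0, M 3 0, eq_smul_one_add_smul_Kmat_of_commute (h ![1, 0, 0]) (h ![0, 1, 0]) hK⟩
  · rintro ⟨c, d, rfl⟩
    exact ⟨fun a => (Kmat_commute_isoc a).smul_one_add_smul_left c d,
      (Commute.refl Kmat).smul_one_add_smul_left c d⟩
end

section
/- Let K be the 4×4 skew matrix with K² = −I₄ as above, and let J₆ be the standard 6×6 symplectic matrix. The set of 24×24 symmetric matrices of the form M = S ⊗ I₄ + A ⊗ K, with S symmetric 6×6 and A antisymmetric 6×6, is closed under the bracket M ∗ N = M(J₆⊗I₄)N − N(J₆⊗I₄)M; explicitly, for M = Ã⊗I₄ + Ǎ⊗K and N = B̃⊗I₄ + B̌⊗K (Ã,B̃ symmetric, Ǎ,B̌ antisymmetric), M ∗ N = 2[ÃJ₆B̃ − ǍJ₆B̌]_sym ⊗ I₄ + 2[ǍJ₆B̃ + ÃJ₆B̌]_skew ⊗ K. -/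
open Matrix Kronecker

noncomputable section

/-- Symmetric part of a matrix. -/
def symPart {n : Type*} [Fintype n] (A : Matrix n n ℝ) : Matrix n n ℝ :=
  (2 : ℝ)⁻¹ • (A + Aᵀ)

/-- Antisymmetric part of a matrix. -/
def skewPart {n : Type*} [Fintype n] (A : Matrix n n ℝ) : Matrix n n ℝ :=
  (2 : ℝ)⁻¹ • (A - Aᵀ)

/-! Since `K * K = -1`, the map `X + i Y ↦ X ⊗ 1 + Y ⊗ K` is a multiplicative embedding of complex
matrices into real ones. Under it `M` and `N` come from the Hermitian matrices `Z = Ã + i Ǎ` and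
`W = B̃ + i B̌`, while `J₆` stays skew, so `(Z J₆ W)ᴴ = -W J₆ Z` and the bracket is
`Z J₆ W + (Z J₆ W)ᴴ`, twice the Hermitian part of `Z J₆ W`. In real terms that Hermitian part is the
symmetric part of the real component plus `i` times the antisymmetric part of the imaginary one. -/

namespace Matrix

variable {α l m n p : Type*}

theorem sub_kronecker [NonUnitalNonAssocRing α] (A₁ A₂ : Matrix l m α) (B : Matrix n p α) :
    (A₁ - A₂) ⊗ₖ B = A₁ ⊗ₖ B - A₂ ⊗ₖ B := by
  ext ⟨i, k⟩ ⟨j, k'⟩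
  exact sub_mul _ _ _

theorem neg_kronecker [NonUnitalNonAssocRing α] (A : Matrix l m α) (B : Matrix n p α) :
    (-A) ⊗ₖ B = -(A ⊗ₖ B) := by
  ext ⟨i, k⟩ ⟨j, k'⟩
  exact neg_mul _ _

theorem kronecker_neg [NonUnitalNonAssocRing α] (A : Matrix l m α) (B : Matrix n p α) :
    A ⊗ₖ (-B) = -(A ⊗ₖ B) := by
  ext ⟨i, k⟩ ⟨j, k'⟩
  exact mul_neg _ _

end Matrix

section KroneckerComplex

variable {R l m n p : Type*} [CommRing R] [Fintype m] [DecidableEq m] [Fintype n]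

theorem kronecker_one_add_kronecker_mul_kronecker_one (K : Matrix m m R)
    (X Y : Matrix l n R) (C : Matrix n p R) :
    (X ⊗ₖ 1 + Y ⊗ₖ K) * (C ⊗ₖ (1 : Matrix m m R)) = (X * C) ⊗ₖ 1 + (Y * C) ⊗ₖ K := by
  rw [Matrix.add_mul, ← mul_kronecker_mul, ← mul_kronecker_mul, Matrix.mul_one, Matrix.mul_one]

theorem kronecker_one_add_kronecker_mul {K : Matrix m m R} (hK : K * K = -1)
    (X Y : Matrix l n R) (X' Y' : Matrix n p R) :
    (X ⊗ₖ 1 + Y ⊗ₖ K) * (X' ⊗ₖ 1 + Y' ⊗ₖ K) =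
      (X * X' - Y * Y') ⊗ₖ 1 + (X * Y' + Y * X') ⊗ₖ K := by
  simp only [Matrix.add_mul, Matrix.mul_add, ← mul_kronecker_mul, Matrix.mul_one, Matrix.one_mul,
    hK, kronecker_neg, sub_kronecker, add_kronecker]
  abel

end KroneckerComplex

theorem Kmat_mul_self : Kmat * Kmat = -1 := by
  ext i j
  fin_cases i <;> fin_cases j <;> simp [Kmat, mul_apply, Fin.sum_univ_four]

section SymSkew

variable {n : Type*} [Fintype n]

theorem two_smul_symPart (A : Matrix n n ℝ) : (2 : ℝ) • symPart A = A + Aᵀ := by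
  rw [symPart, smul_smul, mul_inv_cancel₀ two_ne_zero, one_smul]

theorem two_smul_skewPart (A : Matrix n n ℝ) : (2 : ℝ) • skewPart A = A - Aᵀ := by
  rw [skewPart, smul_smul, mul_inv_cancel₀ two_ne_zero, one_smul]

variable {R : Type*} [CommRing R] {J A B Ac Bc : Matrix n n R}

theorem transpose_mul_mul_sub_mul_mul (hJ : Jᵀ = -J) (hA : A.IsSymm) (hB : B.IsSymm)
    (hAc : Acᵀ = -Ac) (hBc : Bcᵀ = -Bc) :
    (A * J * B - Ac * J * Bc)ᵀ = -(B * J * A - Bc * J * Ac) := by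
  simp only [transpose_sub, transpose_mul, hJ, hA.eq, hB.eq, hAc, hBc, neg_mul, mul_neg,
    neg_neg, mul_assoc]
  abel

theorem transpose_mul_mul_add_mul_mul (hJ : Jᵀ = -J) (hA : A.IsSymm) (hB : B.IsSymm)
    (hAc : Acᵀ = -Ac) (hBc : Bcᵀ = -Bc) :
    (Ac * J * B + A * J * Bc)ᵀ = B * J * Ac + Bc * J * A := by
  simp only [transpose_add, transpose_mul, hJ, hA.eq, hB.eq, hAc, hBc, neg_mul, mul_neg,
    neg_neg, mul_assoc]

end SymSkew

theorem kronecker_bracket_eq {n m : Type*} [Fintype n] [Fintype m] [DecidableEq m]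
    {K : Matrix m m ℝ} (hK : K * K = -1) {J A B Ac Bc : Matrix n n ℝ} (hJ : Jᵀ = -J)
    (hA : A.IsSymm) (hB : B.IsSymm) (hAc : Acᵀ = -Ac) (hBc : Bcᵀ = -Bc) :
    (A ⊗ₖ 1 + Ac ⊗ₖ K) * (J ⊗ₖ 1) * (B ⊗ₖ 1 + Bc ⊗ₖ K)
        - (B ⊗ₖ 1 + Bc ⊗ₖ K) * (J ⊗ₖ 1) * (A ⊗ₖ 1 + Ac ⊗ₖ K) =
      (2 : ℝ) • (symPart (A * J * B - Ac * J * Bc) ⊗ₖ 1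
        + skewPart (Ac * J * B + A * J * Bc) ⊗ₖ K) := by
  rw [kronecker_one_add_kronecker_mul_kronecker_one, kronecker_one_add_kronecker_mul_kronecker_one,
    kronecker_one_add_kronecker_mul hK, kronecker_one_add_kronecker_mul hK, smul_add,
    ← smul_kronecker, ← smul_kronecker, two_smul_symPart, two_smul_skewPart,
    transpose_mul_mul_sub_mul_mul hJ hA hB hAc hBc,
    transpose_mul_mul_add_mul_mul hJ hA hB hAc hBc]
  simp only [add_kronecker, sub_kronecker, neg_kronecker]
  abel

theorem kronecker_bracket_closed
    (At Bt Ac Bc : Matrix (Fin 3 ⊕ Fin 3) (Fin 3 ⊕ Fin 3) ℝ)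
    (hAt : At.IsSymm) (hBt : Bt.IsSymm) (hAc : Acᵀ = -Ac) (hBc : Bcᵀ = -Bc) :
    letI J6 := Matrix.J (Fin 3) ℝ
    letI I4 : Matrix (Fin 4) (Fin 4) ℝ := 1
    letI M := At ⊗ₖ I4 + Ac ⊗ₖ Kmat
    letI N := Bt ⊗ₖ I4 + Bc ⊗ₖ Kmat
    letI JJ := J6 ⊗ₖ I4
    M * JJ * N - N * JJ * M =
      (2 : ℝ) • ((symPart (At * J6 * Bt - Ac * J6 * Bc)) ⊗ₖ I4
        + (skewPart (Ac * J6 * Bt + At * J6 * Bc)) ⊗ₖ Kmat) :=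
  kronecker_bracket_eq Kmat_mul_self (J_transpose _ _) hAt hBt hAc hBc

end
end

section
/- On the phase space ℝ⁴ⁿ × ℝ⁴ⁿ (n quadruples (Qᵢ, Pᵢ)) with canonical Poisson bracket, the real span of the quadratic functions Qᵢᵀ Qⱼ, Pᵢᵀ Pⱼ, Qᵢᵀ Pⱼ, Qᵢᵀ K Qⱼ, Pᵢᵀ K Pⱼ, Qᵢᵀ K Pⱼ (1 ≤ i, j ≤ n, K the 4×4 skew matrix above) is closed under the Poisson bracket and has dimension (2n)², e.g. for n = 3 it is 36-dimensional. -/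
open Matrix

noncomputable section

abbrev PhaseN (n : ℕ) := (Fin n → Fin 4 → ℝ) × (Fin n → Fin 4 → ℝ)

/-- Canonical Poisson bracket on T*ℝ⁴ⁿ. -/
def pb {n : ℕ} (f g : PhaseN n → ℝ) (z : PhaseN n) : ℝ :=
  ∑ i : Fin n, ∑ a : Fin 4,
    (fderiv ℝ f z (Pi.single i (Pi.single a 1), 0) *
       fderiv ℝ g z (0, Pi.single i (Pi.single a 1))
      - fderiv ℝ f z (0, Pi.single i (Pi.single a 1)) *
       fderiv ℝ g z (Pi.single i (Pi.single a 1), 0))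

/-- The quadratic invariants of the n-body problem. -/
def invariants (n : ℕ) : Set (PhaseN n → ℝ) :=
  {f | ∃ i j : Fin n,
    f = (fun z => z.1 i ⬝ᵥ z.1 j) ∨
    f = (fun z => z.2 i ⬝ᵥ z.2 j) ∨
    f = (fun z => z.1 i ⬝ᵥ z.2 j) ∨
    f = (fun z => z.1 i ⬝ᵥ (Kmat *ᵥ z.1 j)) ∨
    f = (fun z => z.2 i ⬝ᵥ (Kmat *ᵥ z.2 j)) ∨
    f = (fun z => z.1 i ⬝ᵥ (Kmat *ᵥ z.2 j))}

/-! Write a phase point as the matrix `X` whose rows are `Q₁, …, Qₙ, P₁, …, Pₙ`, and put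
`N = 1 + K`. Every quadratic function `z ↦ tr (C X M Xᵀ)` has gradient `C X M + Cᵀ X Mᵀ`, so the
bracket of two of them is again a sum of four such functions, in which the `4 × 4` factors are
multiplied and transposed (and the `2n × 2n` factors multiplied through the symplectic matrix
`J`). Since `Nᵀ = 1 - K`, the invariants span exactly the image of the injective linear map
`C ↦ tr (C X N Xᵀ)` on `2n × 2n` matrices, the symmetric part of `C` producing the dot products
and its skew part the `K`-pairings. As `Kᵀ = -K` and `K² = -1`, the plane `span {1, K}` is
closed under products and transposes, which closes the span under the bracket; its dimension is
that of the matrices, `(2n)²`. -/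

theorem fderiv_bilinear_diag_apply {𝕜 E F : Type*} [NontriviallyNormedField 𝕜] [CompleteSpace 𝕜]
    [NormedAddCommGroup E] [NormedSpace 𝕜 E] [FiniteDimensional 𝕜 E]
    [NormedAddCommGroup F] [NormedSpace 𝕜 F] (β : E →ₗ[𝕜] E →ₗ[𝕜] F) (z v : E) :
    fderiv 𝕜 (fun x => β x x) z v = β z v + β v z := by
  have h := β.toContinuousBilinearMap.hasFDerivAt_of_bilinear (hasFDerivAt_id z) (hasFDerivAt_id z)
  rw [show (fun x => β x x) = fun x => β.toContinuousBilinearMap (id x) (id x) from rfl, h.fderiv]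
  simp

theorem trace_transpose_mul_J_mul {l m R : Type*} [Fintype l] [DecidableEq l] [Fintype m]
    [CommRing R] (F G : Matrix (l ⊕ l) m R) :
    trace (Gᵀ * J l R * F) =
      ∑ i, ∑ a, (F (Sum.inl i) a * G (Sum.inr i) a - F (Sum.inr i) a * G (Sum.inl i) a) := by
  simp only [trace, J, diag_apply, mul_apply, transpose_apply, Fintype.sum_sum_type, mul_comm,
    fromBlocks_apply₁₁, fromBlocks_apply₁₂, fromBlocks_apply₂₁, fromBlocks_apply₂₂,
    Matrix.zero_apply, Matrix.neg_apply, one_apply, zero_mul, neg_mul, ite_mul, one_mul,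
    Finset.sum_const_zero, Finset.sum_ite_eq', Finset.mem_univ, ↓reduceIte, zero_add, add_zero,
    Finset.sum_neg_distrib, Finset.sum_sub_distrib]
  rw [Finset.sum_comm, Finset.sum_comm (f := fun _ _ => G _ _ * F _ _), ← Finset.sum_sub_distrib]
  simp [sub_eq_add_neg, Finset.sum_add_distrib]

theorem trace_mul_transpose_single_add_single {ι κ R : Type*} [Fintype ι] [DecidableEq ι]
    [Fintype κ] [DecidableEq κ] [CommRing R] (C : Matrix ι ι R) (M : Matrix κ κ R) (k k' : ι)
    (a b : κ) :
    trace (C * (single k a (1 : R) + single k' b 1) * M * (single k a (1 : R) + single k' b 1)ᵀ) =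
      M a a * C k k + M a b * C k' k + M b a * C k k' + M b b * C k' k' := by
  rw [Matrix.mul_assoc C, Matrix.mul_assoc C, trace_mul_comm]
  simp [Matrix.mul_add, Matrix.add_mul, transpose_single, trace_single_mul]
  ring

theorem trace_mul_transpose_mul_cycle {ι κ R : Type*} [Fintype ι] [Fintype κ] [CommRing R]
    (P Q : Matrix κ κ R) (D₁ D₂ D₃ : Matrix ι ι R) (X : Matrix ι κ R) :
    trace (P * (Xᵀ * D₁) * D₂ * (D₃ * X * Q)) = trace (D₁ * D₂ * D₃ * X * (Q * P) * Xᵀ) := by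
  simp only [Matrix.mul_assoc]
  rw [trace_mul_comm P]
  simp only [Matrix.mul_assoc]
  rw [trace_mul_comm Xᵀ]
  simp only [Matrix.mul_assoc]

namespace NBody

theorem Kmat_transpose : Kmatᵀ = -Kmat := by
  ext i j; fin_cases i <;> fin_cases j <;> simp [Kmat]

theorem Kmat_mul_self : Kmat * Kmat = -1 := by
  ext i j; fin_cases i <;> fin_cases j <;> simp [Kmat, mul_apply, Fin.sum_univ_four, one_apply]

variable {n : ℕ}

def phaseMatrix : PhaseN n ≃ₗ[ℝ] Matrix (Fin n ⊕ Fin n) (Fin 4) ℝ where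
  toFun z := fromRows z.1 z.2
  invFun X := (X.toRows₁, X.toRows₂)
  map_add' _ _ := by ext (i | i) a <;> rfl
  map_smul' _ _ := by ext (i | i) a <;> rfl
  left_inv _ := rfl
  right_inv X := fromRows_toRows X

@[simp] theorem phaseMatrix_apply_inl (z : PhaseN n) (i : Fin n) :
    phaseMatrix z (Sum.inl i) = z.1 i := rfl

@[simp] theorem phaseMatrix_apply_inr (z : PhaseN n) (i : Fin n) :
    phaseMatrix z (Sum.inr i) = z.2 i := rfl

def quadForm :
    Matrix (Fin n ⊕ Fin n) (Fin n ⊕ Fin n) ℝ →ₗ[ℝ] Matrix (Fin 4) (Fin 4) ℝ →ₗ[ℝ] PhaseN n → ℝ :=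
  LinearMap.mk₂ ℝ (fun C M z => trace (C * phaseMatrix z * M * (phaseMatrix z)ᵀ))
    (by intros; ext; simp [Matrix.add_mul])
    (by intros; ext; simp)
    (by intros; ext; simp [Matrix.mul_add, Matrix.add_mul])
    (by intros; ext; simp)

theorem quadForm_apply (C : Matrix (Fin n ⊕ Fin n) (Fin n ⊕ Fin n) ℝ)
    (M : Matrix (Fin 4) (Fin 4) ℝ) (z : PhaseN n) :
    quadForm C M z = trace (C * phaseMatrix z * M * (phaseMatrix z)ᵀ) := rfl

theorem quadForm_transpose (C : Matrix (Fin n ⊕ Fin n) (Fin n ⊕ Fin n) ℝ)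
    (M : Matrix (Fin 4) (Fin 4) ℝ) : quadForm Cᵀ M = quadForm C Mᵀ := by
  ext z
  rw [quadForm_apply, quadForm_apply, ← trace_transpose]
  simp only [transpose_mul, transpose_transpose, Matrix.mul_assoc]
  rw [trace_mul_comm C]
  simp only [Matrix.mul_assoc]

theorem quadForm_single (j k : Fin n ⊕ Fin n) (M : Matrix (Fin 4) (Fin 4) ℝ) (z : PhaseN n) :
    quadForm (single j k 1) M z = phaseMatrix z k ⬝ᵥ (M *ᵥ phaseMatrix z j) := by
  rw [quadForm_apply, Matrix.mul_assoc, Matrix.mul_assoc, trace_single_mul, one_smul]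
  simp [mul_apply, dotProduct, mulVec, Finset.mul_sum, mul_comm, mul_left_comm]

def gradQuadForm (C : Matrix (Fin n ⊕ Fin n) (Fin n ⊕ Fin n) ℝ) (M : Matrix (Fin 4) (Fin 4) ℝ)
    (z : PhaseN n) : Matrix (Fin n ⊕ Fin n) (Fin 4) ℝ :=
  C * phaseMatrix z * M + Cᵀ * phaseMatrix z * Mᵀ

theorem fderiv_quadForm (C : Matrix (Fin n ⊕ Fin n) (Fin n ⊕ Fin n) ℝ)
    (M : Matrix (Fin 4) (Fin 4) ℝ) (z v : PhaseN n) {r : Fin n ⊕ Fin n} {a : Fin 4}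
    (hv : phaseMatrix v = single r a 1) :
    fderiv ℝ (quadForm C M) z v = gradQuadForm C M z r a := by
  let β : PhaseN n →ₗ[ℝ] PhaseN n →ₗ[ℝ] ℝ := LinearMap.mk₂ ℝ
    (fun z w => trace (C * phaseMatrix z * M * (phaseMatrix w)ᵀ))
    (by intros; simp [Matrix.mul_add, Matrix.add_mul])
    (by intros; simp)
    (by intros; simp [Matrix.mul_add])
    (by intros; simp)
  rw [show quadForm C M = fun x => β x x from rfl, fderiv_bilinear_diag_apply]
  simp only [β, LinearMap.mk₂_apply, hv, gradQuadForm]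
  have h₁ : trace (C * phaseMatrix z * M * (single r a (1 : ℝ))ᵀ) =
      (C * phaseMatrix z * M) r a := by
    simp [transpose_single, trace_mul_single]
  have h₂ : trace (C * single r a (1 : ℝ) * M * (phaseMatrix z)ᵀ) =
      (Cᵀ * phaseMatrix z * Mᵀ) r a := by
    rw [Matrix.mul_assoc C, Matrix.mul_assoc C, trace_mul_comm, Matrix.mul_assoc, Matrix.mul_assoc,
      trace_single_mul, one_smul, ← transpose_apply (M * _)]
    simp only [transpose_mul, transpose_transpose, Matrix.mul_assoc]
  rw [h₁, h₂, Matrix.add_apply]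

theorem phaseMatrix_single_fst (i : Fin n) (a : Fin 4) :
    phaseMatrix ((Pi.single i (Pi.single a 1), 0) : PhaseN n) = single (Sum.inl i) a 1 := by
  ext (j | j) b <;> simp [single_apply, Pi.single_apply, ite_apply, ite_and, eq_comm]

theorem phaseMatrix_single_snd (i : Fin n) (a : Fin 4) :
    phaseMatrix ((0, Pi.single i (Pi.single a 1)) : PhaseN n) = single (Sum.inr i) a 1 := by
  ext (j | j) b <;> simp [single_apply, Pi.single_apply, ite_apply, ite_and, eq_comm]

theorem pb_quadForm (A B : Matrix (Fin n ⊕ Fin n) (Fin n ⊕ Fin n) ℝ)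
    (M M' : Matrix (Fin 4) (Fin 4) ℝ) :
    pb (quadForm A M) (quadForm B M') =
      quadForm (Bᵀ * J (Fin n) ℝ * A) (M * M'ᵀ) + quadForm (Bᵀ * J (Fin n) ℝ * Aᵀ) (Mᵀ * M'ᵀ)
        + quadForm (B * J (Fin n) ℝ * A) (M * M') + quadForm (B * J (Fin n) ℝ * Aᵀ) (Mᵀ * M') := by
  ext z
  have hpb : pb (quadForm A M) (quadForm B M') z =
      trace ((gradQuadForm B M' z)ᵀ * J (Fin n) ℝ * gradQuadForm A M z) := by
    rw [trace_transpose_mul_J_mul]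
    simp only [pb, fderiv_quadForm _ _ _ _ (phaseMatrix_single_fst _ _),
      fderiv_quadForm _ _ _ _ (phaseMatrix_single_snd _ _)]
  rw [hpb]
  simp only [gradQuadForm, quadForm_apply, transpose_add, transpose_mul, transpose_transpose,
    Matrix.add_mul, Matrix.mul_add, trace_add, Pi.add_apply,
    trace_mul_transpose_mul_cycle]
  abel

def spanOneK : Submodule ℝ (Matrix (Fin 4) (Fin 4) ℝ) := Submodule.span ℝ {1, Kmat}

theorem mul_mem_spanOneK {M M' : Matrix (Fin 4) (Fin 4) ℝ} (hM : M ∈ spanOneK)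
    (hM' : M' ∈ spanOneK) : M * M' ∈ spanOneK := by
  obtain ⟨a, b, rfl⟩ := Submodule.mem_span_pair.1 hM
  obtain ⟨c, d, rfl⟩ := Submodule.mem_span_pair.1 hM'
  refine Submodule.mem_span_pair.2 ⟨a * c - b * d, a * d + b * c, ?_⟩
  simp only [Matrix.add_mul, Matrix.mul_add, smul_mul_smul, Matrix.one_mul, Matrix.mul_one,
    Kmat_mul_self]
  module

theorem one_mem_spanOneK : 1 ∈ spanOneK := Submodule.subset_span (by simp)

theorem Kmat_mem_spanOneK : Kmat ∈ spanOneK := Submodule.subset_span (by simp)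

theorem one_add_Kmat_mem_spanOneK : 1 + Kmat ∈ spanOneK :=
  add_mem one_mem_spanOneK Kmat_mem_spanOneK

theorem transpose_one_add_Kmat_mem_spanOneK : (1 + Kmat)ᵀ ∈ spanOneK := by
  rw [transpose_add, transpose_one, Kmat_transpose, ← sub_eq_add_neg]
  exact sub_mem one_mem_spanOneK Kmat_mem_spanOneK

def invariantsParam : Matrix (Fin n ⊕ Fin n) (Fin n ⊕ Fin n) ℝ →ₗ[ℝ] PhaseN n → ℝ :=
  quadForm.flip (1 + Kmat)

theorem quadForm_mem_range_invariantsParam (C : Matrix (Fin n ⊕ Fin n) (Fin n ⊕ Fin n) ℝ)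
    {M : Matrix (Fin 4) (Fin 4) ℝ} (hM : M ∈ spanOneK) :
    quadForm C M ∈ LinearMap.range invariantsParam := by
  obtain ⟨a, b, rfl⟩ := Submodule.mem_span_pair.1 hM
  refine ⟨((a + b) / 2) • C + ((a - b) / 2) • Cᵀ, ?_⟩
  simp only [invariantsParam, LinearMap.flip_apply, map_add, map_smul, LinearMap.add_apply,
    quadForm_transpose, transpose_one, Kmat_transpose]
  simp only [← map_smul, ← map_add]
  congr 1
  module

theorem span_invariants_le_range :
    Submodule.span ℝ (invariants n) ≤ LinearMap.range invariantsParam := by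
  have h (j k : Fin n ⊕ Fin n) {M : Matrix (Fin 4) (Fin 4) ℝ} (hM : M ∈ spanOneK) :
      (fun z => phaseMatrix z k ⬝ᵥ (M *ᵥ phaseMatrix z j)) ∈ LinearMap.range invariantsParam := by
    simpa only [← quadForm_single] using quadForm_mem_range_invariantsParam (single j k 1) hM
  rw [Submodule.span_le]
  rintro f ⟨i, j, rfl | rfl | rfl | rfl | rfl | rfl⟩
  · simpa using h (.inl j) (.inl i) one_mem_spanOneK
  · simpa using h (.inr j) (.inr i) one_mem_spanOneK
  · simpa using h (.inr j) (.inl i) one_mem_spanOneK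
  · simpa using h (.inl j) (.inl i) Kmat_mem_spanOneK
  · simpa using h (.inr j) (.inr i) Kmat_mem_spanOneK
  · simpa using h (.inr j) (.inl i) Kmat_mem_spanOneK

theorem quadForm_single_mem_span {M : Matrix (Fin 4) (Fin 4) ℝ} (hM : M = 1 ∨ M = Kmat)
    (j k : Fin n ⊕ Fin n) : quadForm (single j k 1) M ∈ Submodule.span ℝ (invariants n) := by
  have hQP (i i' : Fin n) :
      quadForm (single (.inl i') (.inl i) 1) M ∈ Submodule.span ℝ (invariants n) ∧
        quadForm (single (.inr i') (.inr i) 1) M ∈ Submodule.span ℝ (invariants n) ∧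
        quadForm (single (.inr i') (.inl i) 1) M ∈ Submodule.span ℝ (invariants n) := by
    simp only [funext (quadForm_single _ _ M), phaseMatrix_apply_inl, phaseMatrix_apply_inr]
    refine ⟨Submodule.subset_span ⟨i, i', ?_⟩, Submodule.subset_span ⟨i, i', ?_⟩,
      Submodule.subset_span ⟨i, i', ?_⟩⟩ <;> rcases hM with rfl | rfl <;> simp
  rcases j with i' | i' <;> rcases k with i | i
  · exact (hQP i i').1
  · rw [← transpose_single, quadForm_transpose]
    rcases hM with rfl | rfl
    · simpa using (hQP i' i).2.2
    · simpa [Kmat_transpose] using neg_mem (hQP i' i).2.2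
  · exact (hQP i i').2.2
  · exact (hQP i i').2.1

theorem range_le_span_invariants :
    LinearMap.range invariantsParam ≤ Submodule.span ℝ (invariants n) := by
  rintro _ ⟨C, rfl⟩
  rw [matrix_eq_sum_single C]
  simp only [map_sum]
  refine Submodule.sum_mem _ fun j _ => Submodule.sum_mem _ fun k _ => ?_
  rw [← mul_one (C j k), ← smul_eq_mul, ← smul_single, map_smul]
  refine Submodule.smul_mem _ _ ?_
  simp only [invariantsParam, map_add]
  exact add_mem (quadForm_single_mem_span (.inl rfl) j k) (quadForm_single_mem_span (.inr rfl) j k)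

theorem span_invariants_eq_range :
    Submodule.span ℝ (invariants n) = LinearMap.range invariantsParam :=
  le_antisymm span_invariants_le_range range_le_span_invariants

theorem invariantsParam_injective : Function.Injective (invariantsParam (n := n)) := by
  refine (injective_iff_map_eq_zero _).2 fun C hC => ?_
  have key (k k' : Fin n ⊕ Fin n) (a b : Fin 4) :
      (1 + Kmat) a a * C k k + (1 + Kmat) a b * C k' k + (1 + Kmat) b a * C k k'
        + (1 + Kmat) b b * C k' k' = 0 := by
    have h := congrFun hC (phaseMatrix.symm (single k a 1 + single k' b 1))
    rwa [invariantsParam, LinearMap.flip_apply, quadForm_apply, LinearEquiv.apply_symm_apply,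
      trace_mul_transpose_single_add_single] at h
  ext k k'
  have h₁ : C k' k' + C k k' + C k' k + C k k = 0 := by
    simpa [Kmat, one_apply] using key k' k 0 0
  have h₂ : C k' k' - C k k' + C k' k + C k k = 0 := by
    simpa [Kmat, one_apply, ← sub_eq_add_neg] using key k' k 0 3
  rw [Matrix.zero_apply]
  linarith

theorem pb_invariantsParam_mem_range (A B : Matrix (Fin n ⊕ Fin n) (Fin n ⊕ Fin n) ℝ) :
    pb (invariantsParam A) (invariantsParam B) ∈ LinearMap.range invariantsParam := by
  have hN := one_add_Kmat_mem_spanOneK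
  have hNt := transpose_one_add_Kmat_mem_spanOneK
  simp only [invariantsParam, LinearMap.flip_apply, pb_quadForm]
  refine add_mem (add_mem (add_mem ?_ ?_) ?_) ?_ <;>
    exact quadForm_mem_range_invariantsParam _ (mul_mem_spanOneK (by assumption) (by assumption))

end NBody

theorem invariants_span_closed_and_dim_general (n : ℕ) :
    (∀ f g, f ∈ Submodule.span ℝ (invariants n) → g ∈ Submodule.span ℝ (invariants n) →
      pb f g ∈ Submodule.span ℝ (invariants n)) ∧
    Module.finrank ℝ (Submodule.span ℝ (invariants n)) = (2 * n) ^ 2 := by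
  rw [NBody.span_invariants_eq_range]
  refine ⟨?_, ?_⟩
  · rintro _ _ ⟨A, rfl⟩ ⟨B, rfl⟩
    exact NBody.pb_invariantsParam_mem_range A B
  · rw [LinearMap.finrank_range_of_inj NBody.invariantsParam_injective, Module.finrank_matrix]
    simp only [Fintype.card_sum, Fintype.card_fin, Module.finrank_self, mul_one]
    ring

theorem invariants_span_closed_and_dim (n : ℕ) (hn : 0 < n) :
    (∀ f g, f ∈ Submodule.span ℝ (invariants n) → g ∈ Submodule.span ℝ (invariants n) →
      pb f g ∈ Submodule.span ℝ (invariants n)) ∧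
    Module.finrank ℝ (Submodule.span ℝ (invariants n)) = (2 * n) ^ 2 :=
  invariants_span_closed_and_dim_general n

end
end
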